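/- Let G(x) be a parametrized BWR-game and let τ₁ ≤ τ₂ both lie in the ergodicity interval I(G(x)). Let s_W* be an optimal White strategy in G(τ₂) and s_B* an optimal Black strategy in G(τ₁). Then the pair (s_W*, s_B*) is a saddle point (pair of optimal strategies) in G(x) for every x ∈ [τ₁, τ₂]. -/

import Mathlib

/-!
The games `G(x)` differ only in the reward `x` of the loop at `w`, which every valid situation
keeps fixed. So for `y ≤ x` the expected one-step rewards of `G(x)` exceed those of `G(y)` by at
most `x - y`, and since the Markov chain is the same, so do the mean payoffs. Hence for
`x ∈ [τ₁, τ₂]`, White gets at most `τ₁ + (x - τ₁) = x` against `s_B*` in `G(x)`, Black pays at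
least `τ₂ - (τ₂ - x) = x` against `s_W*`, and `(s_W*, s_B*)` is a saddle point.
-/

open Matrix Filter

/-- A BWR-game: finite digraph with no sinks, positions partitioned into
White (`player v = 0`), Black (`player v = 1`) and Random (`player v = 2`),
positive transition probabilities on arcs out of random positions summing to 1,
and local rewards on arcs. -/
structure BWR (V : Type) [Fintype V] [DecidableEq V] where
  succ : V → Finset V
  succ_nonempty : ∀ v, (succ v).Nonempty
  player : V → Fin 3
  p : V → V → ℝ
  p_mem : ∀ v u, player v = 2 → (u ∈ succ v ↔ 0 < p v u)
  p_zero : ∀ v u, player v = 2 → u ∉ succ v → p v u = 0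
  p_sum : ∀ v, player v = 2 → ∑ u ∈ succ v, p v u = 1
  r : V → V → ℝ

namespace BWR

variable {V : Type} [Fintype V] [DecidableEq V] (G : BWR V)

/-- A (pure stationary) situation is valid if it moves along arcs. -/
def Valid (s : V → V) : Prop := ∀ v, s v ∈ G.succ v

/-- Combine a White strategy and a Black strategy into one situation. -/
def combine (sW sB : V → V) : V → V := fun v => if G.player v = 0 then sW v else sB v

/-- Transition matrix of the Markov chain obtained by fixing situation `s`. -/
noncomputable def P (s : V → V) : Matrix V V ℝ :=
  Matrix.of fun v u => if G.player v = 2 then G.p v u else if s v = u then 1 else 0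

/-- Expected one-step reward under situation `s`. -/
noncomputable def rbar (s : V → V) : V → ℝ :=
  fun v => if G.player v = 2 then ∑ u ∈ G.succ v, G.p v u * G.r v u else G.r v (s v)

/-- Limiting mean payoff from initial position `v` under situation `s`. -/
noncomputable def payoff (s : V → V) (v : V) : ℝ :=
  Filter.liminf
    (fun T : ℕ => (∑ t ∈ Finset.range (T + 1), (G.P s ^ t).mulVec (G.rbar s)) v / (T + 1))
    Filter.atTop

/-- `μ` is the value function of the game: some saddle point in pure stationary
strategies realizes it uniformly. -/
def IsValue (μ : V → ℝ) : Prop :=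
  ∃ sW sB : V → V, G.Valid (G.combine sW sB) ∧
    (∀ v, μ v = G.payoff (G.combine sW sB) v) ∧
    (∀ sW' : V → V, G.Valid (G.combine sW' sB) → ∀ v, G.payoff (G.combine sW' sB) v ≤ μ v) ∧
    (∀ sB' : V → V, G.Valid (G.combine sW sB') → ∀ v, μ v ≤ G.payoff (G.combine sW sB') v)

/-- The local value `M̄[r](v)`. -/
noncomputable def mbar : V → ℝ := fun v =>
  if G.player v = 0 then (G.succ v).sup' (G.succ_nonempty v) (fun u => G.r v u)
  else if G.player v = 1 then (G.succ v).inf' (G.succ_nonempty v) (fun u => G.r v u)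
  else ∑ u ∈ G.succ v, G.p v u * G.r v u

/-- A locally optimal situation achieves the local value at every controlled position. -/
def LocallyOptimal (s : V → V) : Prop :=
  G.Valid s ∧ ∀ v, G.player v ≠ 2 → G.r v (s v) = G.mbar v

end BWR

namespace Matrix

variable {n : Type*} [Fintype n] [DecidableEq n] {M : Matrix n n ℝ}

lemma mulVec_mono_of_mem_rowStochastic (hM : M ∈ rowStochastic ℝ n) {g h : n → ℝ}
    (hgh : g ≤ h) : M *ᵥ g ≤ M *ᵥ h := by
  intro i
  have := nonneg_mulVec_of_mem_rowStochastic hM (x := h - g) (fun j => sub_nonneg.2 (hgh j)) i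
  rwa [mulVec_sub, Pi.sub_apply, sub_nonneg] at this

lemma mulVec_const_of_mem_rowStochastic (hM : M ∈ rowStochastic ℝ n) (c : ℝ) :
    M *ᵥ (fun _ => c) = fun _ => c := by
  have hc : (fun _ => c : n → ℝ) = c • 1 := by ext; simp
  rw [hc, mulVec_smul, one_vecMul_of_mem_rowStochastic hM]

noncomputable def cesaroMean (M : Matrix n n ℝ) (g : n → ℝ) (T : ℕ) (i : n) : ℝ :=
  (∑ t ∈ Finset.range (T + 1), (M ^ t) *ᵥ g) i / (T + 1)

lemma cesaroMean_mono (hM : M ∈ rowStochastic ℝ n) {g h : n → ℝ} (hgh : g ≤ h) (T : ℕ)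
    (i : n) : M.cesaroMean g T i ≤ M.cesaroMean h T i := by
  unfold cesaroMean
  gcongr
  simp only [Finset.sum_apply]
  exact Finset.sum_le_sum fun t _ => mulVec_mono_of_mem_rowStochastic (pow_mem hM t) hgh i

lemma cesaroMean_add_const (hM : M ∈ rowStochastic ℝ n) (g : n → ℝ) (c : ℝ) (T : ℕ) (i : n) :
    M.cesaroMean (g + fun _ => c) T i = M.cesaroMean g T i + c := by
  simp only [cesaroMean, mulVec_add, mulVec_const_of_mem_rowStochastic (pow_mem hM _),
    Finset.sum_add_distrib, Pi.add_apply, Finset.sum_apply, Finset.sum_const, Finset.card_range,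
    nsmul_eq_mul]
  field_simp
  push_cast
  ring

lemma cesaroMean_const (hM : M ∈ rowStochastic ℝ n) (c : ℝ) (T : ℕ) (i : n) :
    M.cesaroMean (fun _ => c) T i = c := by
  simpa [cesaroMean] using cesaroMean_add_const hM 0 c T i

lemma abs_cesaroMean_le (hM : M ∈ rowStochastic ℝ n) (g : n → ℝ) (T : ℕ) (i : n) :
    |M.cesaroMean g T i| ≤ ‖g‖ := by
  rw [abs_le]
  constructor
  · simpa [cesaroMean_const hM] using cesaroMean_mono hM (g := fun _ => -‖g‖) 
      (fun j => neg_le_of_abs_le (norm_le_pi_norm g j)) T i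
  · simpa [cesaroMean_const hM] using cesaroMean_mono hM (h := fun _ => ‖g‖) 
      (fun j => le_of_abs_le (norm_le_pi_norm g j)) T i

lemma liminf_cesaroMean_le_add (hM : M ∈ rowStochastic ℝ n) {g h : n → ℝ} {c : ℝ}
    (hgh : g ≤ h + fun _ => c) (i : n) :
    liminf (fun T => M.cesaroMean g T i) atTop ≤ liminf (fun T => M.cesaroMean h T i) atTop + c := by
  have bdd_below (f : n → ℝ) : IsBoundedUnder (· ≥ ·) atTop (fun T => M.cesaroMean f T i) :=
    isBoundedUnder_of ⟨-‖f‖, fun T => (abs_le.1 (abs_cesaroMean_le hM f T i)).1⟩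
  have bdd_above (f : n → ℝ) : IsBoundedUnder (· ≤ ·) atTop (fun T => M.cesaroMean f T i) :=
    isBoundedUnder_of ⟨‖f‖, fun T => (abs_le.1 (abs_cesaroMean_le hM f T i)).2⟩
  calc liminf (fun T => M.cesaroMean g T i) atTop
      ≤ liminf (fun T => M.cesaroMean (h + fun _ => c) T i) atTop :=
        liminf_le_liminf (.of_forall fun T => cesaroMean_mono hM hgh T i) (bdd_below g)
          (bdd_above _).isCoboundedUnder_ge
    _ = liminf (fun T => M.cesaroMean h T i + c) atTop := by
        simp only [cesaroMean_add_const hM]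
    _ = liminf (fun T => M.cesaroMean h T i) atTop + c :=
        liminf_add_const _ _ c (bdd_above h).isCoboundedUnder_ge (bdd_below h)

end Matrix

namespace BWR

variable {V : Type} [Fintype V] [DecidableEq V]

lemma P_mem_rowStochastic (G : BWR V) (s : V → V) : G.P s ∈ rowStochastic ℝ V := by
  refine mem_rowStochastic_iff_sum.2 ⟨fun v u => ?_, fun v => ?_⟩
  · by_cases hv : G.player v = 2
    · by_cases hu : u ∈ G.succ v
      · simpa [P, hv] using ((G.p_mem v u hv).1 hu).le
      · simp [P, hv, G.p_zero v u hv hu]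
    · simp only [P, of_apply, if_neg hv]
      split_ifs <;> norm_num
  · by_cases hv : G.player v = 2
    · simp only [P, of_apply, if_pos hv]
      rw [← G.p_sum v hv]
      exact (Finset.sum_subset (Finset.subset_univ _) fun u _ hu => G.p_zero v u hv hu).symm
    · simp [P, hv]

lemma payoff_eq_liminf_cesaroMean (G : BWR V) (s : V → V) (v : V) :
    G.payoff s v = liminf (fun T => (G.P s).cesaroMean (G.rbar s) T v) atTop := rfl

lemma payoff_le_payoff_add {G₁ G₂ : BWR V} {s : V → V} (hP : G₁.P s = G₂.P s) {c : ℝ}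
    (hr : G₁.rbar s ≤ G₂.rbar s + fun _ => c) (v : V) :
    G₁.payoff s v ≤ G₂.payoff s v + c := by
  rw [payoff_eq_liminf_cesaroMean, payoff_eq_liminf_cesaroMean, hP]
  exact liminf_cesaroMean_le_add (G₂.P_mem_rowStochastic s) hr v

end BWR

namespace BWR

variable {V : Type} [Fintype V] [DecidableEq V]

structure IsParametrized (G : ℝ → BWR V) (w : V) : Prop where
  succ_eq : ∀ x y, (G x).succ = (G y).succ
  player_eq : ∀ x y, (G x).player = (G y).player
  p_eq : ∀ x y, (G x).p = (G y).p
  player_loop_ne : ∀ x, (G x).player w ≠ 2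
  succ_loop : ∀ x, (G x).succ w = {w}
  r_loop : ∀ x, (G x).r w w = x
  r_eq : ∀ x y v u, ¬(v = w ∧ u = w) → (G x).r v u = (G y).r v u

namespace IsParametrized

variable {G : ℝ → BWR V} {w : V}

lemma combine_eq (hG : IsParametrized G w) (x y : ℝ) : (G x).combine = (G y).combine := by
  ext sW sB v
  simp only [combine, hG.player_eq x y]

lemma P_eq (hG : IsParametrized G w) (x y : ℝ) : (G x).P = (G y).P := by
  ext s v u
  simp only [P, hG.player_eq x y, hG.p_eq x y]

lemma valid_iff (hG : IsParametrized G w) (x y : ℝ) {s : V → V} :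
    (G x).Valid s ↔ (G y).Valid s := by
  simp only [Valid, hG.succ_eq x y]

lemma apply_loop_of_valid (hG : IsParametrized G w) {x : ℝ} {s : V → V} (hs : (G x).Valid s) :
    s w = w := by
  simpa [hG.succ_loop x] using hs w

lemma rbar_le_rbar_add (hG : IsParametrized G w) {x y : ℝ} (hyx : y ≤ x) {s : V → V}
    (hs : s w = w) : (G x).rbar s ≤ (G y).rbar s + fun _ => x - y := by
  intro u
  simp only [Pi.add_apply]
  by_cases huw : u = w
  · subst huw
    simp [rbar, hG.player_loop_ne, hs, hG.r_loop]
  · have hr : ∀ a, (G x).r u a = (G y).r u a := fun a => hG.r_eq x y u a fun h => huw h.1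
    have hrbar : (G x).rbar s u = (G y).rbar s u := by
      simp only [rbar, hG.player_eq x y, hG.succ_eq x y, hG.p_eq x y, hr]
    linarith

lemma payoff_le_payoff_add (hG : IsParametrized G w) {x y : ℝ} (hyx : y ≤ x) {s : V → V}
    (hs : (G x).Valid s) (v : V) : (G x).payoff s v ≤ (G y).payoff s v + (x - y) :=
  BWR.payoff_le_payoff_add (congrFun (hG.P_eq x y) s) (hG.rbar_le_rbar_add hyx (hG.apply_loop_of_valid hs)) v

lemma payoff_le_of_black_optimal (hG : IsParametrized G w) {τ x : ℝ} (hτx : τ ≤ x)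
    {sW sB : V → V}
    (hBopt : (G τ).Valid ((G τ).combine sW sB) → ∀ v, (G τ).payoff ((G τ).combine sW sB) v ≤ τ)
    (hs : (G x).Valid ((G x).combine sW sB)) (v : V) :
    (G x).payoff ((G x).combine sW sB) v ≤ x := by
  rw [hG.combine_eq τ x] at hBopt
  have := hBopt ((hG.valid_iff x τ).1 hs) v
  linarith [hG.payoff_le_payoff_add hτx hs v]

lemma le_payoff_of_white_optimal (hG : IsParametrized G w) {τ x : ℝ} (hxτ : x ≤ τ)
    {sW sB : V → V}
    (hWopt : (G τ).Valid ((G τ).combine sW sB) → ∀ v, τ ≤ (G τ).payoff ((G τ).combine sW sB) v)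
    (hs : (G x).Valid ((G x).combine sW sB)) (v : V) :
    x ≤ (G x).payoff ((G x).combine sW sB) v := by
  rw [hG.combine_eq τ x] at hWopt
  have hsτ := (hG.valid_iff x τ).1 hs
  linarith [hWopt hsτ v, hG.payoff_le_payoff_add hxτ hsτ v]

end IsParametrized

end BWR

theorem parametrized_BWR_interval_saddle_point_general
    {V : Type} [Fintype V] [DecidableEq V]
    (G : ℝ → BWR V) (w : V)
    (hsucc : ∀ x y, (G x).succ = (G y).succ)
    (hplayer : ∀ x y, (G x).player = (G y).player)
    (hp : ∀ x y, (G x).p = (G y).p)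
    (hwdet : ∀ x, (G x).player w ≠ 2)
    (hw : ∀ x, (G x).succ w = {w})
    (hwr : ∀ x, (G x).r w w = x)
    (hr : ∀ x y v u, ¬(v = w ∧ u = w) → (G x).r v u = (G y).r v u)
    (τ₁ τ₂ : ℝ)
    (sWs sBs : V → V)
    (hvalid : ∀ x, (G x).Valid ((G x).combine sWs sBs))
    -- sW* is optimal for White in G(τ₂)
    (hWopt : ∀ sB : V → V, (G τ₂).Valid ((G τ₂).combine sWs sB) →
      ∀ v, τ₂ ≤ (G τ₂).payoff ((G τ₂).combine sWs sB) v)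
    -- sB* is optimal for Black in G(τ₁)
    (hBopt : ∀ sW : V → V, (G τ₁).Valid ((G τ₁).combine sW sBs) →
      ∀ v, (G τ₁).payoff ((G τ₁).combine sW sBs) v ≤ τ₁) :
    ∀ x ∈ Set.Icc τ₁ τ₂, ∀ v : V,
      (∀ sW : V → V, (G x).Valid ((G x).combine sW sBs) →
        (G x).payoff ((G x).combine sW sBs) v ≤ (G x).payoff ((G x).combine sWs sBs) v) ∧
      (∀ sB : V → V, (G x).Valid ((G x).combine sWs sB) →
        (G x).payoff ((G x).combine sWs sBs) v ≤ (G x).payoff ((G x).combine sWs sB) v) := by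
  have hG : BWR.IsParametrized G w := ⟨hsucc, hplayer, hp, hwdet, hw, hwr, hr⟩
  rintro x ⟨hτ₁x, hxτ₂⟩ v
  have upper (sW : V → V) (hs : (G x).Valid ((G x).combine sW sBs)) :=
    hG.payoff_le_of_black_optimal hτ₁x (hBopt sW) hs v
  have lower (sB : V → V) (hs : (G x).Valid ((G x).combine sWs sB)) :=
    hG.le_payoff_of_white_optimal hxτ₂ (hWopt sB) hs v
  exact ⟨fun sW hs => (upper sW hs).trans (lower sBs (hvalid x)),
    fun sB hs => (upper sWs (hvalid x)).trans (lower sB hs)⟩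

/-- Let `G(x)` be a parametrized BWR-game and `τ₁ ≤ τ₂` two
points of its ergodicity interval (so `G(τᵢ)` is ergodic with value `τᵢ`
everywhere). If `sW*` is an optimal White strategy in `G(τ₂)` and `sB*` an
optimal Black strategy in `G(τ₁)`, then `(sW*, sB*)` is a saddle point of
`G(x)` for every `x ∈ [τ₁, τ₂]`. -/
theorem parametrized_BWR_interval_saddle_point
    {V : Type} [Fintype V] [DecidableEq V]
    (G : ℝ → BWR V) (w : V)
    (hsucc : ∀ x y, (G x).succ = (G y).succ)
    (hplayer : ∀ x y, (G x).player = (G y).player)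
    (hp : ∀ x y, (G x).p = (G y).p)
    (hwdet : ∀ x, (G x).player w ≠ 2)
    (hw : ∀ x, (G x).succ w = {w})
    (hwr : ∀ x, (G x).r w w = x)
    (hr : ∀ x y v u, ¬(v = w ∧ u = w) → (G x).r v u = (G y).r v u)
    (τ₁ τ₂ : ℝ) (hτ : τ₁ ≤ τ₂)
    -- G(τ₁) and G(τ₂) are ergodic, with (constant) values τ₁ and τ₂ respectively
    (herg₁ : ∃ μ : V → ℝ, (G τ₁).IsValue μ ∧ ∀ v, μ v = τ₁)
    (herg₂ : ∃ μ : V → ℝ, (G τ₂).IsValue μ ∧ ∀ v, μ v = τ₂)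
    (sWs sBs : V → V)
    (hvalid : ∀ x, (G x).Valid ((G x).combine sWs sBs))
    -- sW* is optimal for White in G(τ₂)
    (hWopt : ∀ sB : V → V, (G τ₂).Valid ((G τ₂).combine sWs sB) →
      ∀ v, τ₂ ≤ (G τ₂).payoff ((G τ₂).combine sWs sB) v)
    -- sB* is optimal for Black in G(τ₁)
    (hBopt : ∀ sW : V → V, (G τ₁).Valid ((G τ₁).combine sW sBs) →
      ∀ v, (G τ₁).payoff ((G τ₁).combine sW sBs) v ≤ τ₁) :
    ∀ x ∈ Set.Icc τ₁ τ₂, ∀ v : V,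
      (∀ sW : V → V, (G x).Valid ((G x).combine sW sBs) →
        (G x).payoff ((G x).combine sW sBs) v ≤ (G x).payoff ((G x).combine sWs sBs) v) ∧
      (∀ sB : V → V, (G x).Valid ((G x).combine sWs sB) →
        (G x).payoff ((G x).combine sWs sBs) v ≤ (G x).payoff ((G x).combine sWs sB) v) :=
  parametrized_BWR_interval_saddle_point_general G w hsucc hplayer hp hwdet hw hwr hr τ₁ τ₂ sWs sBs
    hvalid hWopt hBopt
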